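/- Define I(a,b) = ∫_0^∞ φ_a(x) φ_b(x) ω_0(x) dx for normalized Hermite polynomials. Then the recursion I(a+1, b+1) = (φ_{a+1}(0) φ_b(0) ω_0(0) + √(a+1) I(a,b))/√(b+1) holds for all a, b ≥ 0. -/

import Mathlib

open MeasureTheory

noncomputable def phi : ℕ → ℝ → ℝ
  | 0 => fun _ => 1
  | 1 => fun x => x
  | (n + 2) => fun x =>
      (x * phi (n + 1) x - Real.sqrt ((n : ℝ) + 1) * phi n x) / Real.sqrt ((n : ℝ) + 2)

noncomputable def ω0 (x : ℝ) : ℝ := (Real.sqrt (2 * Real.pi))⁻¹ * Real.exp (-x ^ 2 / 2)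

noncomputable def Ih (a b : ℕ) : ℝ := ∫ x in Set.Ioi (0 : ℝ), phi a x * phi b x * ω0 x

/-! Integration by parts on `(0, ∞)` applied to `phi (a + 1) * (phi b * ω0)`: since
`phi (a + 1)' = √(a + 1) phi a` and `(phi b ω0)' = -√(b + 1) phi (b + 1) ω0`, the integrand of
`√(a + 1) Ih a b - √(b + 1) Ih (a + 1) (b + 1)` is an exact derivative. Polynomials times the
Gaussian are integrable and vanish at infinity, so only the boundary term at `0` survives. -/

open Filter Polynomial Real Topology

-- At `n = 0` the truncated `n - 1` is harmless because its coefficient `√0` vanishes.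
lemma sqrt_mul_phi_succ (n : ℕ) (x : ℝ) :
    √((n : ℝ) + 1) * phi (n + 1) x = x * phi n x - √(n : ℝ) * phi (n - 1) x := by
  rcases n with _ | n
  · simp [phi]
  · have hn : 0 < √((n : ℝ) + 2) := by positivity
    simp only [phi, Nat.add_sub_cancel]
    push_cast
    rw [show (n : ℝ) + 1 + 1 = n + 2 by ring, mul_div_cancel₀ _ hn.ne']

lemma hasDerivAt_phi (n : ℕ) (x : ℝ) :
    HasDerivAt (phi n) (√(n : ℝ) * phi (n - 1) x) x := by
  induction n using phi.induct generalizing x with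
  | case1 => simpa [phi] using hasDerivAt_const x (1 : ℝ)
  | case2 => simpa [phi] using hasDerivAt_id' x
  | case3 n ih₁ ih₀ =>
    have hd : HasDerivAt (fun y => (y * phi (n + 1) y - √((n : ℝ) + 1) * phi n y) / √((n : ℝ) + 2))
        ((1 * phi (n + 1) x + x * (√((n : ℝ) + 1) * phi n x)
          - √((n : ℝ) + 1) * (√(n : ℝ) * phi (n - 1) x)) / √((n : ℝ) + 2)) x := by
      have := ih₁ x
      push_cast at this
      exact (((hasDerivAt_id' x).mul this).sub ((ih₀ x).const_mul _)).div_const _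
    refine hd.congr_deriv ?_
    have hn : 0 < √((n : ℝ) + 2) := by positivity
    have hrec := sqrt_mul_phi_succ n x
    push_cast
    rw [show (n : ℝ) + 1 + 1 = n + 2 by ring, div_eq_iff hn.ne']
    linear_combination (-√((n : ℝ) + 1)) * hrec
      + phi (n + 1) x * (Real.sq_sqrt (by positivity : (0 : ℝ) ≤ n + 1)
        - Real.sq_sqrt (by positivity : (0 : ℝ) ≤ n + 2))

lemma hasDerivAt_ω0 (x : ℝ) : HasDerivAt ω0 (-x * ω0 x) x := by
  have h : HasDerivAt (fun y : ℝ => -y ^ 2 / 2) (-x) x :=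
    (((hasDerivAt_pow 2 x).neg).div_const 2).congr_deriv (by ring)
  exact (h.exp.const_mul (√(2 * π))⁻¹).congr_deriv (by rw [ω0]; ring)

lemma hasDerivAt_phi_mul_ω0 (n : ℕ) (x : ℝ) :
    HasDerivAt (fun y => phi n y * ω0 y) (-(√((n : ℝ) + 1) * phi (n + 1) x * ω0 x)) x := by
  refine ((hasDerivAt_phi n x).mul (hasDerivAt_ω0 x)).congr_deriv ?_
  linear_combination ω0 x * sqrt_mul_phi_succ n x

lemma exists_eval_eq_phi (n : ℕ) : ∃ p : ℝ[X], ∀ x, phi n x = p.eval x := by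
  induction n using phi.induct with
  | case1 => exact ⟨1, fun x => by simp [phi]⟩
  | case2 => exact ⟨X, fun x => by simp [phi]⟩
  | case3 n ih₁ ih₀ =>
    obtain ⟨q, hq⟩ := ih₁
    obtain ⟨p, hp⟩ := ih₀
    refine ⟨(X * q - C √((n : ℝ) + 1) * p) * C (√((n : ℝ) + 2))⁻¹, fun x => ?_⟩
    simp [phi, hp x, hq x, div_eq_mul_inv]

lemma ω0_eq (x : ℝ) : ω0 x = (√(2 * π))⁻¹ * exp (-(1 / 2) * x ^ 2) := by
  rw [ω0]; ring_nf

lemma integrable_eval_mul_ω0 (p : ℝ[X]) : Integrable (fun x => p.eval x * ω0 x) := by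
  induction p using Polynomial.induction_on' with
  | add p q hp hq =>
    exact (hp.add hq).congr (.of_forall fun x => by simp [add_mul])
  | monomial n a =>
    have h := integrable_rpow_mul_exp_neg_mul_sq (b := 1 / 2) (by norm_num) (s := n)
      (by linarith [(n.cast_nonneg : (0 : ℝ) ≤ n)])
    refine (h.const_mul (a * (√(2 * π))⁻¹)).congr (Eventually.of_forall fun x => ?_)
    simp only [eval_monomial, ω0_eq, Real.rpow_natCast]
    ring

lemma tendsto_eval_mul_ω0_cocompact (p : ℝ[X]) :
    Tendsto (fun x => p.eval x * ω0 x) (cocompact ℝ) (𝓝 0) := by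
  induction p using Polynomial.induction_on' with
  | add p q hp hq => simpa [add_mul] using hp.add hq
  | monomial n a =>
    rw [tendsto_zero_iff_norm_tendsto_zero]
    have h := (tendsto_rpow_abs_mul_exp_neg_mul_sq_cocompact (a := 1 / 2) (by norm_num) n).const_mul
      (|a| * (√(2 * π))⁻¹)
    rw [mul_zero] at h
    refine h.congr fun x => ?_
    simp only [eval_monomial, ω0_eq, Real.rpow_natCast, norm_mul, Real.norm_eq_abs, abs_pow]
    rw [abs_of_pos (by positivity : 0 < (√(2 * π))⁻¹), abs_of_pos (exp_pos _)]
    ring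

lemma exists_eval_eq_phi_mul_phi (a b : ℕ) : ∃ p : ℝ[X], ∀ x, phi a x * phi b x = p.eval x := by
  obtain ⟨p, hp⟩ := exists_eval_eq_phi a
  obtain ⟨q, hq⟩ := exists_eval_eq_phi b
  exact ⟨p * q, fun x => by rw [hp, hq, eval_mul]⟩

lemma integrable_phi_mul_phi_mul_ω0 (a b : ℕ) : Integrable (fun x => phi a x * phi b x * ω0 x) := by
  obtain ⟨p, hp⟩ := exists_eval_eq_phi_mul_phi a b
  simpa only [hp] using integrable_eval_mul_ω0 p

lemma tendsto_phi_mul_phi_mul_ω0_cocompact (a b : ℕ) :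
    Tendsto (fun x => phi a x * phi b x * ω0 x) (cocompact ℝ) (𝓝 0) := by
  obtain ⟨p, hp⟩ := exists_eval_eq_phi_mul_phi a b
  simpa only [hp] using tendsto_eval_mul_ω0_cocompact p

theorem stmt10 (a b : ℕ) :
    Ih (a + 1) (b + 1)
      = (phi (a + 1) 0 * phi b 0 * ω0 0 + Real.sqrt ((a : ℝ) + 1) * Ih a b)
          / Real.sqrt ((b : ℝ) + 1) := by
  have hderiv (x : ℝ) : HasDerivAt (fun y => phi (a + 1) y * (phi b y * ω0 y))
      (√((a : ℝ) + 1) * (phi a x * phi b x * ω0 x)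
        - √((b : ℝ) + 1) * (phi (a + 1) x * phi (b + 1) x * ω0 x)) x := by
    have h := (hasDerivAt_phi (a + 1) x).mul (hasDerivAt_phi_mul_ω0 b x)
    push_cast at h
    refine h.congr_deriv ?_
    ring
  have hint (c d : ℕ) := (integrable_phi_mul_phi_mul_ω0 c d).integrableOn (s := Set.Ioi 0)
  have hftc := integral_Ioi_of_hasDerivAt_of_tendsto (hderiv 0).continuousAt.continuousWithinAt
    (fun x _ => hderiv x) (((hint a b).const_mul _).sub ((hint (a + 1) (b + 1)).const_mul _))
    (((tendsto_phi_mul_phi_mul_ω0_cocompact (a + 1) b).mono_left atTop_le_cocompact).congr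
      fun x => mul_assoc _ _ _)
  rw [integral_sub ((hint a b).const_mul _) ((hint (a + 1) (b + 1)).const_mul _),
    integral_const_mul, integral_const_mul] at hftc
  rw [eq_div_iff (by positivity), Ih, Ih]
  linarith
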